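/- arXiv:2304.07388 — 4 statements merged into one kernel-verified Lean document; each statement's English description precedes it below -/
import Mathlib

section
/- Let n be a positive integer, a_i, b_i > 0 for i = 1..n, and c, y > 0. Then the function f(x) = Σ_{i=1}^n log(1 + a_i/(b_i/(xy) + c)) is strictly concave on the open interval (0, ∞). -/
/-!
Clearing denominators, each summand is `log ((a + c) y x + b) - log (c y x + b)`, whose
derivative `a b y / (((a + c) y x + b) (c y x + b))` is strictly decreasing on `x > 0`;
hence every summand, and so the nonempty sum, is strictly concave.
-/

open Set Real

theorem StrictConcaveOn.finset_sum {𝕜 E β ι : Type*} [Semiring 𝕜] [PartialOrder 𝕜]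
    [AddCommMonoid E] [AddCommMonoid β] [PartialOrder β] [IsOrderedCancelAddMonoid β]
    [SMul 𝕜 E] [DistribMulAction 𝕜 β] {t : Set E} {s : Finset ι} {f : ι → E → β}
    (hs : s.Nonempty) (hf : ∀ i ∈ s, StrictConcaveOn 𝕜 t (f i)) :
    StrictConcaveOn 𝕜 t (fun x => ∑ i ∈ s, f i x) := by
  simpa only [← Finset.sum_apply] using
    Finset.sum_induction_nonempty f (StrictConcaveOn 𝕜 t) (fun _ _ => StrictConcaveOn.add) hs hf

lemma hasDerivAt_log_mul_add_sub_log_mul_add {A C b x : ℝ} (hA : A * x + b ≠ 0)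
    (hC : C * x + b ≠ 0) :
    HasDerivAt (fun x => log (A * x + b) - log (C * x + b))
      ((A - C) * b / ((A * x + b) * (C * x + b))) x := by
  have hlin : ∀ K : ℝ, HasDerivAt (fun x => K * x + b) K x := fun K => by
    simpa using ((hasDerivAt_id x).const_mul K).add_const b
  refine (((hlin A).log hA).sub ((hlin C).log hC)).congr_deriv ?_
  rw [div_sub_div _ _ hA hC]
  ring

lemma strictConcaveOn_log_mul_add_sub_log_mul_add {A C b : ℝ} (hC : 0 ≤ C) (hCA : C < A)
    (hb : 0 < b) :
    StrictConcaveOn ℝ (Ioi 0) (fun x => log (A * x + b) - log (C * x + b)) := by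
  have hApos : ∀ x ∈ Ioi (0 : ℝ), 0 < A * x + b := fun x (hx : 0 < x) => by
    have := hC.trans_lt hCA
    positivity
  have hCpos : ∀ x ∈ Ioi (0 : ℝ), 0 < C * x + b := fun x (hx : 0 < x) => by positivity
  have hcont : ContinuousOn (fun x => log (A * x + b) - log (C * x + b)) (Ioi 0) :=
    ((continuousOn_id.const_smul A).add continuousOn_const).log (fun x hx => (hApos x hx).ne')
      |>.sub (((continuousOn_id.const_smul C).add continuousOn_const).log
        (fun x hx => (hCpos x hx).ne'))
  have hderiv_anti :
      StrictAntiOn (fun x => (A - C) * b / ((A * x + b) * (C * x + b))) (Ioi 0) :=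
    fun x hx y hy hxy => div_lt_div_of_pos_left (mul_pos (sub_pos.2 hCA) hb)
      (mul_pos (hApos x hx) (hCpos x hx))
      (mul_lt_mul_of_lt_of_le_of_nonneg_of_pos (by nlinarith) (by nlinarith)
        (hApos x hx).le (hCpos y hy))
  refine StrictAntiOn.strictConcaveOn_of_deriv (convex_Ioi 0) hcont ?_
  rw [interior_Ioi]
  exact hderiv_anti.congr fun x hx =>
    (hasDerivAt_log_mul_add_sub_log_mul_add (hApos x hx).ne' (hCpos x hx).ne').deriv.symm

lemma log_one_add_div_div_mul_add {a b c x y : ℝ} (ha : 0 < a) (hb : 0 < b) (hc : 0 < c)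
    (hx : 0 < x) (hy : 0 < y) :
    log (1 + a / (b / (x * y) + c)) = log ((a + c) * y * x + b) - log (c * y * x + b) := by
  rw [← log_div (by positivity) (by positivity)]
  congr 1
  field_simp
  ring

/-- the ergodic achievable sum-rate
`f(x) = ∑ i, log(1 + aᵢ/(bᵢ/(xy) + c))` (the numerator of the energy-efficiency
objective) is strictly concave as a function of the number of source antennas `x`
on `(0, ∞)`, the number of receive antennas `y > 0` being fixed. -/
theorem sum_rate_strictConcaveOn (n : ℕ) (hn : 0 < n) (a b : Fin n → ℝ)
    (ha : ∀ i, 0 < a i) (hb : ∀ i, 0 < b i) (c y : ℝ) (hc : 0 < c) (hy : 0 < y) :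
    StrictConcaveOn ℝ (Set.Ioi (0 : ℝ))
      (fun x : ℝ => ∑ i : Fin n, Real.log (1 + a i / (b i / (x * y) + c))) := by
  have : Nonempty (Fin n) := ⟨⟨0, hn⟩⟩
  refine StrictConcaveOn.finset_sum Finset.univ_nonempty fun i _ => ?_
  refine (strictConcaveOn_log_mul_add_sub_log_mul_add (by positivity) ?_ (hb i)).congr
    fun x (hx : 0 < x) => (log_one_add_div_div_mul_add (ha i) (hb i) hc hx hy).symm
  nlinarith [ha i]
end

section
/- Let n be a positive integer, a_i, b_i > 0 for i = 1..n, c > 0, y > 0, P₁ > 0, P₂ > 0, and K ≥ 0. Define f(x) = Σ_{i=1}^n log(1 + a_i/(b_i/(xy) + c)), g(x) = P₁(x + K y) + P₂, and EE(x) = f(x)/g(x) for x > 0. Then there exists a unique x̄ > 0 with EE'(x̄) = 0, and for every x > 0 with x ≠ x̄ one has EE(x) < EE(x̄); i.e., x̄ is the unique global maximizer of EE on (0, ∞). -/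
/-!
Each summand of the sum-rate is `log (b + A x) - log (b + C x)` with `A = (c + a) y > C = c y`, so
the numerator `f` is increasing and strictly concave with `f 0 = 0`, while `f' = O(x⁻²)`.
Since `g` is affine with slope `P₁`, the derivative of `f / g` is `h / g²` with
`h = f' g - P₁ f`, and `h' = f'' g < 0`. Now `h 0 = f' 0 * g 0 > 0`, and `h < 0` for large `x`
because `f' g → 0` while `f` stays above a positive constant. So `h` has exactly one zero, and
`f / g` increases before it and decreases after it.
-/

open Set Filter Topology Real

noncomputable section LogRatio

variable {b A C x : ℝ}

def logRatio (b A C x : ℝ) : ℝ := log (b + A * x) - log (b + C * x)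

def logRatioDeriv (b A C x : ℝ) : ℝ := (A - C) * b / ((b + A * x) * (b + C * x))

def logRatioDeriv2 (b A C x : ℝ) : ℝ :=
  -((A - C) * b * (A * (b + C * x) + C * (b + A * x))) / ((b + A * x) * (b + C * x)) ^ 2

@[simp]
lemma logRatio_zero : logRatio b A C 0 = 0 := by simp [logRatio]

lemma log_one_add_div_eq_logRatio {a y : ℝ} (hb : 0 < b) (ha : 0 ≤ a) (hc : 0 ≤ C) (hx : 0 < x)
    (hy : 0 < y) :
    log (1 + a / (b / (x * y) + C)) = logRatio b ((C + a) * y) (C * y) x := by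
  have hCx : 0 < b + C * y * x := by positivity
  rw [logRatio, ← log_div (by positivity) hCx.ne']
  congr 1
  field_simp
  ring

lemma hasDerivAt_logRatio (hA : 0 < b + A * x) (hC : 0 < b + C * x) :
    HasDerivAt (logRatio b A C) (logRatioDeriv b A C x) x := by
  have hlog : ∀ {D : ℝ}, 0 < b + D * x →
      HasDerivAt (fun t => log (b + D * t)) (D / (b + D * x)) x := fun hD => by
    simpa using (((hasDerivAt_id x).const_mul _).const_add b).log hD.ne'
  refine ((hlog hA).sub (hlog hC)).congr_deriv ?_
  rw [logRatioDeriv, div_sub_div _ _ hA.ne' hC.ne']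
  ring

lemma hasDerivAt_logRatioDeriv (hA : b + A * x ≠ 0) (hC : b + C * x ≠ 0) :
    HasDerivAt (logRatioDeriv b A C) (logRatioDeriv2 b A C x) x := by
  have hden : HasDerivAt (fun t => (b + A * t) * (b + C * t))
      (A * (b + C * x) + (b + A * x) * C) x := by
    have haff : ∀ D : ℝ, HasDerivAt (fun t => b + D * t) D x := fun D => by
      simpa using ((hasDerivAt_id x).const_mul D).const_add b
    exact (haff A).mul (haff C)
  refine ((hden.inv (mul_ne_zero hA hC)).const_mul ((A - C) * b)).congr_deriv ?_
  simp only [logRatioDeriv2]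
  ring

lemma logRatioDeriv_pos (hb : 0 < b) (hCA : C < A) (hA : 0 < b + A * x) (hC : 0 < b + C * x) :
    0 < logRatioDeriv b A C x :=
  div_pos (mul_pos (sub_pos.2 hCA) hb) (mul_pos hA hC)

lemma logRatioDeriv2_neg (hb : 0 < b) (hC : 0 ≤ C) (hCA : C < A) (hx : 0 ≤ x) :
    logRatioDeriv2 b A C x < 0 := by
  have hA : 0 < A := hC.trans_lt hCA
  have : 0 < (A - C) * b * (A * (b + C * x) + C * (b + A * x)) :=
    mul_pos (mul_pos (sub_pos.2 hCA) hb) (by positivity)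
  rw [logRatioDeriv2, neg_div]
  exact neg_neg_of_pos (div_pos this (by positivity))

lemma logRatioDeriv_le (hb : 0 ≤ b) (hC : 0 < C) (hCA : C ≤ A) (hx : 0 < x) :
    logRatioDeriv b A C x ≤ (A - C) * b / (A * C) / x ^ 2 := by
  have hA : 0 < A := hC.trans_le hCA
  rw [logRatioDeriv, div_div]
  apply div_le_div_of_nonneg_left (mul_nonneg (sub_nonneg.2 hCA) hb) (by positivity)
  calc A * C * x ^ 2 = (A * x) * (C * x) := by ring
    _ ≤ (b + A * x) * (b + C * x) := by gcongr <;> linarith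

lemma tendsto_logRatioDeriv_mul_affine {p q : ℝ} (hb : 0 < b) (hC : 0 < C) (hCA : C < A)
    (hp : 0 ≤ p) (hq : 0 ≤ q) :
    Tendsto (fun x => logRatioDeriv b A C x * (p * x + q)) atTop (𝓝 0) := by
  have hA : 0 < A := hC.trans hCA
  let D := (A - C) * b / (A * C) * (p + q)
  refine tendsto_of_tendsto_of_tendsto_of_le_of_le' tendsto_const_nhds
    (tendsto_const_nhds.div_atTop tendsto_id : Tendsto (fun x => D / x) atTop (𝓝 0)) ?_ ?_
  · filter_upwards [eventually_ge_atTop 0] with x hx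
    exact mul_nonneg (logRatioDeriv_pos hb hCA (by positivity) (by positivity)).le (by positivity)
  · filter_upwards [eventually_ge_atTop 1] with x hx
    have hx0 : 0 < x := by linarith
    calc logRatioDeriv b A C x * (p * x + q)
        ≤ (A - C) * b / (A * C) / x ^ 2 * ((p + q) * x) := by
          gcongr
          · exact logRatioDeriv_le hb.le hC hCA.le hx0
          · nlinarith
      _ = D / x := by simp only [D]; field_simp

end LogRatio

lemma apply_lt_of_deriv_pos_of_deriv_neg {φ : ℝ → ℝ} {a xb x : ℝ}
    (hφ : ∀ t, a < t → DifferentiableAt ℝ φ t) (hxb : a < xb)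
    (hpos : ∀ t ∈ Ioo a xb, 0 < deriv φ t) (hneg : ∀ t, xb < t → deriv φ t < 0)
    (hx : a < x) (hne : x ≠ xb) : φ x < φ xb := by
  have hcont : ∀ {u v : ℝ}, a < u → ContinuousOn φ (Icc u v) := fun hu t ht =>
    (hφ t (hu.trans_le ht.1)).continuousAt.continuousWithinAt
  rcases hne.lt_or_gt with hlt | hgt
  · refine strictMonoOn_of_deriv_pos (convex_Icc x xb) (hcont hx) (fun t ht => ?_)
      (left_mem_Icc.2 hlt.le) (right_mem_Icc.2 hlt.le) hlt
    rw [interior_Icc] at ht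
    exact hpos t ⟨hx.trans ht.1, ht.2⟩
  · refine strictAntiOn_of_deriv_neg (convex_Icc xb x) (hcont hxb) (fun t ht => ?_)
      (left_mem_Icc.2 hgt.le) (right_mem_Icc.2 hgt.le) hgt
    rw [interior_Icc] at ht
    exact hneg t ht.1

lemma exists_zero_of_pos_of_eventually_neg {h : ℝ → ℝ} {a : ℝ} (hcont : ContinuousOn h (Ici a))
    (ha : 0 < h a) (htail : ∀ᶠ x in atTop, h x < 0) : ∃ xb, a < xb ∧ h xb = 0 := by
  obtain ⟨x₀, hx₀, hax₀⟩ := (htail.and (eventually_ge_atTop a)).exists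
  obtain ⟨xb, hxb, hroot⟩ :=
    intermediate_value_Icc' hax₀ (hcont.mono Icc_subset_Ici_self) ⟨hx₀.le, ha.le⟩
  refine ⟨xb, hxb.1.lt_of_ne ?_, hroot⟩
  rintro rfl
  exact ha.ne' hroot

section QuotientByAffine

variable {f f' f'' g : ℝ → ℝ} {p : ℝ}

lemma hasDerivAt_deriv_mul_sub_mul {x : ℝ} (hf : HasDerivAt f (f' x) x)
    (hf' : HasDerivAt f' (f'' x) x) (hg : HasDerivAt g p x) :
    HasDerivAt (fun x => f' x * g x - f x * p) (f'' x * g x) x :=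
  ((hf'.mul hg).sub (hf.mul_const p)).congr_deriv (by ring)

lemma strictAntiOn_deriv_mul_sub_mul {s : Set ℝ} (hs : Convex ℝ s)
    (hf : ∀ x ∈ s, HasDerivAt f (f' x) x) (hf' : ∀ x ∈ s, HasDerivAt f' (f'' x) x)
    (hf'' : ∀ x ∈ s, f'' x < 0) (hg : ∀ x ∈ s, HasDerivAt g p x) (hgpos : ∀ x ∈ s, 0 < g x) :
    StrictAntiOn (fun x => f' x * g x - f x * p) s := by
  have hderiv : ∀ x ∈ s, HasDerivAt (fun x => f' x * g x - f x * p) (f'' x * g x) x :=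
    fun x hx => hasDerivAt_deriv_mul_sub_mul (hf x hx) (hf' x hx) (hg x hx)
  refine strictAntiOn_of_deriv_neg hs (fun x hx => (hderiv x hx).continuousAt.continuousWithinAt)
    fun x hx => ?_
  have hxs := interior_subset hx
  rw [(hderiv x hxs).deriv]
  exact mul_neg_of_neg_of_pos (hf'' x hxs) (hgpos x hxs)

lemma eventually_deriv_mul_sub_mul_neg {a : ℝ} (hmono : StrictMonoOn f (Ici a)) (hfa : 0 ≤ f a)
    (hp : 0 < p) (htend : Tendsto (fun x => f' x * g x) atTop (𝓝 0)) :
    ∀ᶠ x in atTop, f' x * g x - f x * p < 0 := by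
  have hfa1 : 0 < f (a + 1) := hfa.trans_lt (hmono self_mem_Ici (by simp) (lt_add_one a))
  filter_upwards [htend.eventually (gt_mem_nhds (mul_pos hfa1 hp)), eventually_ge_atTop (a + 1)]
    with x hsmall hx
  have : f (a + 1) ≤ f x := hmono.monotoneOn (by simp) (mem_Ici.2 (by linarith)) hx
  nlinarith

theorem exists_unique_critical_point_isMax_div_of_concave {φ : ℝ → ℝ}
    (hφ : EqOn φ (fun x => f x / g x) (Ioi 0)) (hf : ∀ x ≥ 0, HasDerivAt f (f' x) x)
    (hf' : ∀ x ≥ 0, HasDerivAt f' (f'' x) x) (hf0 : f 0 = 0)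
    (hf'pos : ∀ x ≥ 0, 0 < f' x) (hf'' : ∀ x ≥ 0, f'' x < 0)
    (hg : ∀ x, HasDerivAt g p x) (hp : 0 < p) (hgpos : ∀ x ≥ 0, 0 < g x)
    (htend : Tendsto (fun x => f' x * g x) atTop (𝓝 0)) :
    ∃ xb : ℝ, 0 < xb ∧ deriv φ xb = 0 ∧
      (∀ x : ℝ, 0 < x → deriv φ x = 0 → x = xb) ∧
      ∀ x : ℝ, 0 < x → x ≠ xb → φ x < φ xb := by
  set h := fun x => f' x * g x - f x * p
  have hanti : StrictAntiOn h (Ici 0) :=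
    strictAntiOn_deriv_mul_sub_mul (convex_Ici 0) hf hf' hf'' (fun x _ => hg x) hgpos
  have hmono : StrictMonoOn f (Ici 0) :=
    strictMonoOn_of_deriv_pos (convex_Ici 0)
      (fun x hx => (hf x hx).continuousAt.continuousWithinAt) fun x hx =>
        (hf x (interior_subset hx)).deriv ▸ hf'pos x (interior_subset hx)
  have hφ' : ∀ x, 0 < x → HasDerivAt φ (h x / g x ^ 2) x := fun x hx =>
    ((hf x hx.le).div (hg x) (hgpos x hx.le).ne').congr_of_eventuallyEq
      (eventually_of_mem (Ioi_mem_nhds hx) hφ)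
  obtain ⟨xb, hxb, hroot⟩ := exists_zero_of_pos_of_eventually_neg (h := h)
    (fun x hx => (hasDerivAt_deriv_mul_sub_mul (hf x hx) (hf' x hx) (hg x)).continuousAt
      |>.continuousWithinAt)
    (by simpa [h, hf0] using mul_pos (hf'pos 0 le_rfl) (hgpos 0 le_rfl))
    (eventually_deriv_mul_sub_mul_neg hmono hf0.ge hp htend)
  have hg2 : ∀ x, 0 < x → 0 < g x ^ 2 := fun x hx => pow_pos (hgpos x hx.le) 2
  refine ⟨xb, hxb, by rw [(hφ' xb hxb).deriv, hroot, zero_div], fun x hx hcrit => ?_,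
    fun x hx hne => apply_lt_of_deriv_pos_of_deriv_neg (fun t ht => (hφ' t ht).differentiableAt)
      hxb (fun t ht => ?_) (fun t ht => ?_) hx hne⟩
  · rw [(hφ' x hx).deriv, div_eq_zero_iff, or_iff_left (hg2 x hx).ne'] at hcrit
    exact hanti.injOn hx.le hxb.le (hcrit.trans hroot.symm)
  · rw [(hφ' t ht.1).deriv]
    exact div_pos (hroot ▸ hanti ht.1.le hxb.le ht.2) (hg2 t ht.1)
  · rw [(hφ' t (hxb.trans ht)).deriv]
    exact div_neg_of_neg_of_pos (hroot ▸ hanti hxb.le (hxb.trans ht).le ht) (hg2 t (hxb.trans ht))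

end QuotientByAffine

theorem exists_unique_critical_point_isMax_sum_logRatio_div_affine {ι : Type*} [Fintype ι]
    [Nonempty ι] {b A : ι → ℝ} {C p q : ℝ} (hb : ∀ i, 0 < b i) (hC : 0 < C)
    (hCA : ∀ i, C < A i) (hp : 0 < p) (hq : 0 < q) {φ : ℝ → ℝ}
    (hφ : EqOn φ (fun x => (∑ i, logRatio (b i) (A i) C x) / (p * x + q)) (Ioi 0)) :
    ∃ xb : ℝ, 0 < xb ∧ deriv φ xb = 0 ∧
      (∀ x : ℝ, 0 < x → deriv φ x = 0 → x = xb) ∧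
      ∀ x : ℝ, 0 < x → x ≠ xb → φ x < φ xb := by
  have hbA : ∀ i, ∀ x ≥ 0, 0 < b i + A i * x := fun i x hx =>
    add_pos_of_pos_of_nonneg (hb i) (mul_nonneg (hC.trans (hCA i)).le hx)
  have hbC : ∀ i, ∀ x ≥ 0, 0 < b i + C * x := fun i x hx =>
    add_pos_of_pos_of_nonneg (hb i) (mul_nonneg hC.le hx)
  refine exists_unique_critical_point_isMax_div_of_concave hφ
    (f' := fun x => ∑ i, logRatioDeriv (b i) (A i) C x)
    (f'' := fun x => ∑ i, logRatioDeriv2 (b i) (A i) C x)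
    (fun x hx => HasDerivAt.fun_sum fun i _ => hasDerivAt_logRatio (hbA i x hx) (hbC i x hx))
    (fun x hx => HasDerivAt.fun_sum fun i _ =>
      hasDerivAt_logRatioDeriv (hbA i x hx).ne' (hbC i x hx).ne') (by simp)
    (fun x hx => Finset.sum_pos (fun i _ =>
      logRatioDeriv_pos (hb i) (hCA i) (hbA i x hx) (hbC i x hx)) Finset.univ_nonempty)
    (fun x hx => Finset.sum_neg (fun i _ =>
      logRatioDeriv2_neg (hb i) hC.le (hCA i) hx) Finset.univ_nonempty)
    (fun x => by simpa using ((hasDerivAt_id x).const_mul p).add_const q) hp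
    (fun x hx => by positivity) ?_
  simpa [Finset.sum_mul] using tendsto_finsetSum _ fun i _ =>
    tendsto_logRatioDeriv_mul_affine (hb i) hC (hCA i) hp.le hq.le

/-- single-variable content of Theorem 2 and its corollary: the energy
efficiency `EE(x) = f(x)/g(x)`, with sum-rate numerator
`f(x) = ∑ i, log(1 + aᵢ/(bᵢ/(xy) + c))` and affine power consumption
`g(x) = P₁(x + K y) + P₂`, has a unique stationary point `xb > 0`, which is its unique
global maximizer on `(0, ∞)`. -/
theorem energy_efficiency_unique_global_max
    (n : ℕ) (hn : 0 < n) (a b : Fin n → ℝ) (ha : ∀ i, 0 < a i) (hb : ∀ i, 0 < b i)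
    (c y P₁ P₂ K : ℝ) (hc : 0 < c) (hy : 0 < y) (hP₁ : 0 < P₁) (hP₂ : 0 < P₂)
    (hK : 0 ≤ K)
    (EE : ℝ → ℝ)
    (hEE : EE = fun x : ℝ =>
      (∑ i : Fin n, Real.log (1 + a i / (b i / (x * y) + c))) /
        (P₁ * (x + K * y) + P₂)) :
    ∃ xb : ℝ, 0 < xb ∧ deriv EE xb = 0 ∧
      (∀ x : ℝ, 0 < x → deriv EE x = 0 → x = xb) ∧
      ∀ x : ℝ, 0 < x → x ≠ xb → EE x < EE xb := by
  have : Nonempty (Fin n) := Fin.pos_iff_nonempty.mp hn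
  refine exists_unique_critical_point_isMax_sum_logRatio_div_affine (A := fun i => (c + a i) * y)
    hb (mul_pos hc hy) (fun i => mul_lt_mul_of_pos_right (by linarith [ha i]) hy) hP₁
    (by positivity : 0 < P₁ * K * y + P₂) fun x hx => ?_
  simp only [hEE]
  congr 1
  · exact Finset.sum_congr rfl fun i _ =>
      log_one_add_div_eq_logRatio (hb i) (ha i).le hc.le hx hy
  · ring
end

section
/- Let n be a positive integer, a_i, b_i > 0 for i = 1..n, c > 0, y > 0, P₁ > 0, P₂ > 0, and K ≥ 0. Define f(x) = Σ_{i=1}^n log(1 + a_i/(b_i/(xy) + c)), g(x) = P₁(x + K y) + P₂, and EE(x) = f(x)/g(x) for x > 0. Let x̄ > 0 be the (unique) point with EE'(x̄) = 0, and let m > 0. If x̄ ≥ m, then EE(x) < EE(x̄) for every x ≥ m with x ≠ x̄. If x̄ ≤ m, then EE is strictly decreasing on [m, ∞), so EE(x) < EE(m) for every x > m. -/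
/-!
Write `EE = F / G` with `G` positive and affine of slope `P₁`. Then
`EE' = h / G²` with `h = F' G - F P₁`, and `h' = F'' G` because the `F' P₁` terms cancel.
Each summand of `F` is `log (b + (c + a) y x) - log (b + c y x)`, whose second derivative
`(c y / (b + c y x))² - ((c + a) y / (b + (c + a) y x))²` is negative since `k ↦ k / (b + k x)`
is increasing. So `h` is strictly decreasing and vanishes at the stationary point `xb`:
`EE` increases strictly before `xb` and decreases strictly after it.
-/

open Set Real Finset

section QuotientByAffine

variable {s : Set ℝ} {Q F F' F'' G : ℝ → ℝ} {P : ℝ}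

theorem strictAntiOn_deriv_mul_sub_mul_s10 (hs : Convex ℝ s) (hso : IsOpen s)
    (hF : ∀ x ∈ s, HasDerivAt F (F' x) x) (hF' : ∀ x ∈ s, HasDerivAt F' (F'' x) x)
    (hF'' : ∀ x ∈ s, F'' x < 0) (hG : ∀ x ∈ s, HasDerivAt G P x) (hGpos : ∀ x ∈ s, 0 < G x) :
    StrictAntiOn (fun x => F' x * G x - F x * P) s := by
  have hderiv : ∀ x ∈ s, HasDerivAt (fun x => F' x * G x - F x * P) (F'' x * G x) x :=
    fun x hx =>
      (((hF' x hx).fun_mul (hG x hx)).fun_sub ((hF x hx).mul_const P)).congr_deriv (by ring)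
  refine strictAntiOn_of_deriv_neg hs
    (fun x hx => (hderiv x hx).continuousAt.continuousWithinAt) fun x hx => ?_
  rw [hso.interior_eq] at hx
  rw [(hderiv x hx).deriv]
  exact mul_neg_of_neg_of_pos (hF'' x hx) (hGpos x hx)

theorem strictMonoOn_strictAntiOn_of_hasDerivAt {q : ℝ → ℝ} {xb : ℝ}
    (hs : Convex ℝ s) (hso : IsOpen s) (hQ : ∀ x ∈ s, HasDerivAt Q (q x) x)
    (hpos : ∀ x ∈ s, x < xb → 0 < q x) (hneg : ∀ x ∈ s, xb < x → q x < 0) :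
    StrictMonoOn Q (s ∩ Iic xb) ∧ StrictAntiOn Q (s ∩ Ici xb) := by
  have hcont : ContinuousOn Q s := fun x hx => (hQ x hx).continuousAt.continuousWithinAt
  refine ⟨strictMonoOn_of_deriv_pos (hs.inter (convex_Iic xb))
      (hcont.mono inter_subset_left) fun x hx => ?_,
    strictAntiOn_of_deriv_neg (hs.inter (convex_Ici xb))
      (hcont.mono inter_subset_left) fun x hx => ?_⟩
  · rw [interior_inter, hso.interior_eq, interior_Iic] at hx
    rw [(hQ x hx.1).deriv]
    exact hpos x hx.1 hx.2
  · rw [interior_inter, hso.interior_eq, interior_Ici] at hx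
    rw [(hQ x hx.1).deriv]
    exact hneg x hx.1 hx.2

theorem strictMonoOn_strictAntiOn_of_eqOn_div {xb : ℝ} (hs : Convex ℝ s) (hso : IsOpen s)
    (hQ : EqOn Q (fun x => F x / G x) s)
    (hF : ∀ x ∈ s, HasDerivAt F (F' x) x) (hF' : ∀ x ∈ s, HasDerivAt F' (F'' x) x)
    (hF'' : ∀ x ∈ s, F'' x < 0) (hG : ∀ x ∈ s, HasDerivAt G P x) (hGpos : ∀ x ∈ s, 0 < G x)
    (hxb : xb ∈ s) (hstat : deriv Q xb = 0) :
    StrictMonoOn Q (s ∩ Iic xb) ∧ StrictAntiOn Q (s ∩ Ici xb) := by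
  set h : ℝ → ℝ := fun x => F' x * G x - F x * P
  have hQ' : ∀ x ∈ s, HasDerivAt Q (h x / G x ^ 2) x := fun x hx =>
    ((hF x hx).div (hG x hx) (hGpos x hx).ne').congr_of_eventuallyEq
      (Filter.eventuallyEq_of_mem (hso.mem_nhds hx) hQ)
  have hanti : StrictAntiOn h s := strictAntiOn_deriv_mul_sub_mul_s10 hs hso hF hF' hF'' hG hGpos
  have hzero : h xb = 0 := by
    have := (hQ' xb hxb).deriv
    rw [hstat, eq_comm, div_eq_zero_iff] at this
    exact this.resolve_right (pow_ne_zero 2 (hGpos xb hxb).ne')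
  refine strictMonoOn_strictAntiOn_of_hasDerivAt hs hso hQ' (fun x hx hlt => ?_)
    fun x hx hlt => ?_
  · exact div_pos (hzero ▸ hanti hx hxb hlt) (pow_pos (hGpos x hx) 2)
  · exact div_neg_of_neg_of_pos (hzero ▸ hanti hxb hx hlt) (pow_pos (hGpos x hx) 2)

end QuotientByAffine

theorem hasDerivAt_log_add_mul {b k x : ℝ} (hx : b + k * x ≠ 0) :
    HasDerivAt (fun x => log (b + k * x)) (k / (b + k * x)) x := by
  simpa using (((hasDerivAt_id x).const_mul k).const_add b).log hx

theorem hasDerivAt_div_add_mul {b k x : ℝ} (hx : b + k * x ≠ 0) :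
    HasDerivAt (fun x => k / (b + k * x)) (-(k / (b + k * x)) ^ 2) x :=
  ((hasDerivAt_const x k).fun_div (((hasDerivAt_id x).const_mul k).const_add b) hx).congr_deriv
    (by simp only [id]; field_simp; ring)

theorem div_add_mul_lt_div_add_mul {b k₁ k₂ x : ℝ} (hb : 0 < b) (hk₁ : 0 ≤ k₁) (hk : k₁ < k₂)
    (hx : 0 ≤ x) : k₁ / (b + k₁ * x) < k₂ / (b + k₂ * x) := by
  rw [div_lt_div_iff₀ (by positivity) (by nlinarith)]
  nlinarith

section LogRatioSum

variable {ι : Type*} {s : Finset ι} {b k₁ k₂ : ι → ℝ} {x : ℝ}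

theorem hasDerivAt_sum_log_sub_log (hb : ∀ i ∈ s, 0 < b i) (hk₁ : ∀ i ∈ s, 0 ≤ k₁ i)
    (hk₂ : ∀ i ∈ s, 0 ≤ k₂ i) (hx : 0 < x) :
    HasDerivAt (fun x => ∑ i ∈ s, (log (b i + k₂ i * x) - log (b i + k₁ i * x)))
      (∑ i ∈ s, (k₂ i / (b i + k₂ i * x) - k₁ i / (b i + k₁ i * x))) x :=
  .fun_sum fun i hi =>
    have := hb i hi; have := hk₁ i hi; have := hk₂ i hi
    (hasDerivAt_log_add_mul (by positivity)).sub (hasDerivAt_log_add_mul (by positivity))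

theorem hasDerivAt_sum_div_sub_div (hb : ∀ i ∈ s, 0 < b i) (hk₁ : ∀ i ∈ s, 0 ≤ k₁ i)
    (hk₂ : ∀ i ∈ s, 0 ≤ k₂ i) (hx : 0 < x) :
    HasDerivAt (fun x => ∑ i ∈ s, (k₂ i / (b i + k₂ i * x) - k₁ i / (b i + k₁ i * x)))
      (∑ i ∈ s, ((k₁ i / (b i + k₁ i * x)) ^ 2 - (k₂ i / (b i + k₂ i * x)) ^ 2)) x := by
  refine .fun_sum fun i hi => ?_
  have := hb i hi; have := hk₁ i hi; have := hk₂ i hi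
  exact ((hasDerivAt_div_add_mul (by positivity)).sub
    (hasDerivAt_div_add_mul (by positivity))).congr_deriv (by ring)

theorem sum_sq_div_add_mul_sub_sq_neg (hs : s.Nonempty) (hb : ∀ i ∈ s, 0 < b i)
    (hk₁ : ∀ i ∈ s, 0 ≤ k₁ i) (hk : ∀ i ∈ s, k₁ i < k₂ i) (hx : 0 ≤ x) :
    ∑ i ∈ s, ((k₁ i / (b i + k₁ i * x)) ^ 2 - (k₂ i / (b i + k₂ i * x)) ^ 2) < 0 := by
  refine sum_neg (fun i hi => sub_neg.mpr (pow_lt_pow_left₀ ?_ ?_ two_ne_zero)) hs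
  · exact div_add_mul_lt_div_add_mul (hb i hi) (hk₁ i hi) (hk i hi) hx
  · have := hb i hi; have := hk₁ i hi; positivity

end LogRatioSum

theorem log_one_add_div_div_add {a b c t : ℝ} (ha : 0 ≤ a) (hb : 0 < b) (hc : 0 ≤ c) (ht : 0 < t) :
    log (1 + a / (b / t + c)) = log (b + (c + a) * t) - log (b + c * t) := by
  rw [← log_div (by positivity) (by positivity)]
  congr 1
  field_simp
  ring

/-- case structure of Theorem 2 under the Nyquist constraint `x ≥ m`:
for the energy efficiency `EE(x) = f(x)/g(x)` with its (unique) stationary point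
`xb > 0`: if `xb ≥ m` then `xb` maximizes `EE` over `[m, ∞)` strictly; if `xb ≤ m` then
`EE` is strictly decreasing on `[m, ∞)`, so the boundary point `m` is the maximizer. -/
theorem energy_efficiency_constrained_max
    (n : ℕ) (hn : 0 < n) (a b : Fin n → ℝ) (ha : ∀ i, 0 < a i) (hb : ∀ i, 0 < b i)
    (c y P₁ P₂ K : ℝ) (hc : 0 < c) (hy : 0 < y) (hP₁ : 0 < P₁) (hP₂ : 0 < P₂)
    (hK : 0 ≤ K)
    (EE : ℝ → ℝ)
    (hEE : EE = fun x : ℝ =>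
      (∑ i : Fin n, Real.log (1 + a i / (b i / (x * y) + c))) /
        (P₁ * (x + K * y) + P₂))
    (xb : ℝ) (hxb : 0 < xb) (hstat : deriv EE xb = 0)
    (m : ℝ) (hm : 0 < m) :
    (m ≤ xb → ∀ x : ℝ, m ≤ x → x ≠ xb → EE x < EE xb) ∧
      (xb ≤ m → StrictAntiOn EE (Set.Ici m) ∧ ∀ x : ℝ, m < x → EE x < EE m) := by
  have hb' : ∀ i ∈ (Finset.univ : Finset (Fin n)), 0 < b i := fun i _ => hb i
  have hk₁ : ∀ i ∈ (Finset.univ : Finset (Fin n)), 0 ≤ c * y := fun _ _ => by positivity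
  have hk₂ : ∀ i ∈ (Finset.univ : Finset (Fin n)), 0 ≤ (c + a i) * y := fun i _ => by
    have := ha i; positivity
  have hk : ∀ i ∈ (Finset.univ : Finset (Fin n)), c * y < (c + a i) * y := fun i _ =>
    mul_lt_mul_of_pos_right (lt_add_of_pos_right c (ha i)) hy
  have hEEeq : EqOn EE (fun x => (∑ i, (log (b i + (c + a i) * y * x) - log (b i + c * y * x)))
      / (P₁ * (x + K * y) + P₂)) (Ioi 0) := fun x hx => by
    subst hEE
    refine congrArg (· / _) (sum_congr rfl fun i _ => ?_)
    rw [log_one_add_div_div_add (ha i).le (hb i) hc.le (mul_pos hx hy)]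
    ring_nf
  obtain ⟨hmono, hanti⟩ := strictMonoOn_strictAntiOn_of_eqOn_div (convex_Ioi 0) isOpen_Ioi hEEeq
    (fun x hx => hasDerivAt_sum_log_sub_log hb' hk₁ hk₂ hx)
    (fun x hx => hasDerivAt_sum_div_sub_div hb' hk₁ hk₂ hx)
    (fun x hx => sum_sq_div_add_mul_sub_sq_neg (univ_nonempty_iff.mpr ⟨⟨0, hn⟩⟩) hb' hk₁ hk
      (le_of_lt hx))
    (fun x _ => by simpa using (((hasDerivAt_id x).add_const (K * y)).const_mul P₁).add_const P₂)
    (fun x hx => by have : 0 < x := hx; positivity) hxb hstat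
  refine ⟨fun hmxb x hmx hne => ?_, fun hxbm => ?_⟩
  · rcases hne.lt_or_gt with hlt | hgt
    · exact hmono ⟨hm.trans_le hmx, hlt.le⟩ ⟨hxb, self_mem_Iic⟩ hlt
    · exact hanti ⟨hxb, self_mem_Ici⟩ ⟨hxb.trans hgt, hgt.le⟩ hgt
  · have hantim : StrictAntiOn EE (Ici m) :=
      hanti.mono fun x hx => ⟨hm.trans_le hx, hxbm.trans hx⟩
    exact ⟨hantim, fun x hx => hantim self_mem_Ici hx.le hx⟩
end

section
/- Let n be a positive integer, a_i, b_i > 0 for i = 1..n, c > 0, y > 0, P₁ > 0, P₂ > 0, and K ≥ 0. Define f(x) = Σ_{i=1}^n log(1 + a_i/(b_i/(xy) + c)), g(x) = P₁(x + K y) + P₂, and the derivative numerator D(x) = g(x) · Σ_{i=1}^n a_i b_i y / ((c x y + b_i)((c + a_i) x y + b_i)) − P₁ f(x) for x > 0. Then D(x) tends to (P₁ K y + P₂) · y · Σ_{i=1}^n a_i / b_i > 0 as x → 0⁺, and D(x) tends to −P₁ · Σ_{i=1}^n log(1 + a_i/c) < 0 as x → ∞. -/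
/-!
Near `0⁺` every rate term vanishes, because `b / (x y)` blows up, while the rate derivatives are
continuous at `0` with value `y a / b`; so `D → g 0 · y ∑ aᵢ / bᵢ`. As `x → ∞` every rate term tends
to `log (1 + a / c)`, while `g · rateDeriv` decays like `1 / x`: `g` is affine and `rateDeriv`
is `O(1 / x²)`.
-/

open Finset Filter Topology

namespace EnergyEfficiency

/-- A summand of the sum-rate `f` of Theorem 1. -/
noncomputable def rate (a b c y x : ℝ) : ℝ := Real.log (1 + a / (b / (x * y) + c))

/-- `∂ₓ rate a b c y x`. -/
noncomputable def rateDeriv (a b c y x : ℝ) : ℝ :=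
  a * b * y / ((c * x * y + b) * ((c + a) * x * y + b))

theorem tendsto_affine_div_affine_atTop (p q t : ℝ) {s : ℝ} (hs : s ≠ 0) :
    Tendsto (fun x => (p * x + q) / (s * x + t)) atTop (𝓝 (p / s)) := by
  have hlim : Tendsto (fun x => (p + q / x) / (s + t / x)) atTop (𝓝 ((p + 0) / (s + 0))) :=
    ((tendsto_const_nhds.div_atTop tendsto_id).const_add p).div
      ((tendsto_const_nhds.div_atTop tendsto_id).const_add s) (by simpa using hs)
  rw [add_zero, add_zero] at hlim
  refine hlim.congr' ?_
  filter_upwards [eventually_ne_atTop 0] with x hx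
  rw [← mul_div_mul_right _ _ hx, add_mul, add_mul, div_mul_cancel₀ _ hx, div_mul_cancel₀ _ hx,
    mul_comm p, mul_comm s]

theorem tendsto_rate_nhdsGT_zero (a c : ℝ) {b y : ℝ} (hb : 0 < b) (hy : 0 < y) :
    Tendsto (rate a b c y) (𝓝[>] 0) (𝓝 0) := by
  have hden : Tendsto (fun x => b / (x * y) + c) (𝓝[>] 0) atTop := by
    simp_rw [div_mul_eq_div_div_swap, div_eq_mul_inv (b / y)]
    exact tendsto_atTop_add_const_right _ c
      (tendsto_inv_nhdsGT_zero.const_mul_atTop (div_pos hb hy))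
  have hlim := ((tendsto_const_nhds (x := a).div_atTop hden).const_add 1).log
    (by norm_num : (1 : ℝ) + 0 ≠ 0)
  rwa [add_zero, Real.log_one] at hlim

theorem tendsto_rate_atTop (a b y : ℝ) {c : ℝ} (hc : c ≠ 0) (hac : 1 + a / c ≠ 0) :
    Tendsto (rate a b c y) atTop (𝓝 (Real.log (1 + a / c))) := by
  have hden : Tendsto (fun x => b / (x * y) + c) atTop (𝓝 c) := by
    simp_rw [div_mul_eq_div_div]
    simpa using ((tendsto_const_nhds.div_atTop tendsto_id).div_const y).add_const c
  exact ((tendsto_const_nhds.div hden hc).const_add 1).log hac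

theorem tendsto_rateDeriv_nhds_zero (a c y : ℝ) {b : ℝ} (hb : b ≠ 0) :
    Tendsto (rateDeriv a b c y) (𝓝 0) (𝓝 (y * (a / b))) := by
  have hcont : ContinuousAt (rateDeriv a b c y) 0 :=
    ContinuousAt.div (by fun_prop) (by fun_prop) (by simp [hb])
  convert hcont.tendsto using 2
  simp only [rateDeriv, mul_zero, zero_mul, zero_add]
  field_simp

theorem tendsto_affine_mul_rateDeriv_atTop (p q a b : ℝ) {c y : ℝ} (hc : c ≠ 0) (hca : 0 < c + a)
    (hy : 0 < y) : Tendsto (fun x => (p * x + q) * rateDeriv a b c y x) atTop (𝓝 0) := by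
  have hratio : Tendsto (fun x => (p * x + q) / (c * x * y + b)) atTop (𝓝 (p / (c * y))) := by
    simpa only [mul_right_comm c y] using
      tendsto_affine_div_affine_atTop p q b (mul_ne_zero hc hy.ne')
  have hden : Tendsto (fun x => (c + a) * x * y + b) atTop atTop :=
    tendsto_atTop_add_const_right _ b ((tendsto_id.const_mul_atTop hca).atTop_mul_const hy)
  have hprod := hratio.mul (tendsto_const_nhds (x := a * b * y).div_atTop hden)
  rw [mul_zero] at hprod
  exact hprod.congr fun x => by rw [rateDeriv, div_mul_div_comm, mul_div_assoc]

end EnergyEfficiency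

open EnergyEfficiency

/-- sign change of the derivative numerator, appendix: the numerator
`D(x) = g(x) ∑ i aᵢbᵢy/((cxy+bᵢ)((c+aᵢ)xy+bᵢ)) − P₁ f(x)` of the energy-efficiency
derivative tends to the positive limit `(P₁Ky + P₂) y ∑ i aᵢ/bᵢ` as `x → 0⁺` and to the
negative limit `−P₁ ∑ i log(1 + aᵢ/c)` as `x → ∞`. -/
theorem energy_efficiency_deriv_numerator_sign_change
    (n : ℕ) (hn : 0 < n) (a b : Fin n → ℝ) (ha : ∀ i, 0 < a i) (hb : ∀ i, 0 < b i)
    (c y P₁ P₂ K : ℝ) (hc : 0 < c) (hy : 0 < y) (hP₁ : 0 < P₁) (hP₂ : 0 < P₂)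
    (hK : 0 ≤ K)
    (f g D : ℝ → ℝ)
    (hf : f = fun x : ℝ => ∑ i : Fin n, Real.log (1 + a i / (b i / (x * y) + c)))
    (hg : g = fun x : ℝ => P₁ * (x + K * y) + P₂)
    (hD : D = fun x : ℝ =>
      g x * (∑ i : Fin n, a i * b i * y /
          ((c * x * y + b i) * ((c + a i) * x * y + b i))) - P₁ * f x) :
    (Tendsto D (nhdsWithin (0 : ℝ) (Set.Ioi 0))
        (nhds ((P₁ * K * y + P₂) * y * ∑ i : Fin n, a i / b i)) ∧
      0 < (P₁ * K * y + P₂) * y * ∑ i : Fin n, a i / b i) ∧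
      (Tendsto D atTop (nhds (-(P₁ * ∑ i : Fin n, Real.log (1 + a i / c)))) ∧
        -(P₁ * ∑ i : Fin n, Real.log (1 + a i / c)) < 0) := by
  have : Nonempty (Fin n) := ⟨⟨0, hn⟩⟩
  have hD_eq : D = fun x => (P₁ * x + (P₁ * K * y + P₂)) * ∑ i, rateDeriv (a i) (b i) c y x
      - P₁ * ∑ i, rate (a i) (b i) c y x := by
    simp only [hD, hg, hf, rate, rateDeriv]
    ext x
    ring
  have hone_lt : ∀ i, 1 < 1 + a i / c := fun i => lt_add_of_pos_right 1 (div_pos (ha i) hc)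
  refine ⟨⟨?_, ?_⟩, ?_, ?_⟩
  · have hg0 : Tendsto (fun x => P₁ * x + (P₁ * K * y + P₂)) (𝓝[>] 0) (𝓝 (P₁ * K * y + P₂)) :=
      (Continuous.tendsto' (by fun_prop) 0 _ (by ring)).mono_left nhdsWithin_le_nhds
    have hderiv := (tendsto_finsetSum univ fun i _ =>
      tendsto_rateDeriv_nhds_zero (a i) c y (hb i).ne').mono_left
      (nhdsWithin_le_nhds (s := Set.Ioi 0))
    have hrate := tendsto_finsetSum univ fun i _ => tendsto_rate_nhdsGT_zero (a i) c (hb i) hy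
    rw [hD_eq]
    convert (hg0.mul hderiv).sub (hrate.const_mul P₁) using 2
    simp [← mul_sum, mul_assoc]
  · exact mul_pos (by positivity) (sum_pos (fun i _ => div_pos (ha i) (hb i)) univ_nonempty)
  · have hderiv := tendsto_finsetSum univ fun i _ => tendsto_affine_mul_rateDeriv_atTop P₁
      (P₁ * K * y + P₂) (a i) (b i) hc.ne' (add_pos hc (ha i)) hy
    have hrate := tendsto_finsetSum univ fun i _ =>
      tendsto_rate_atTop (a i) (b i) y hc.ne' (one_pos.trans (hone_lt i)).ne'
    rw [hD_eq]
    simpa [mul_sum] using hderiv.sub (hrate.const_mul P₁)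
  · exact neg_lt_zero.mpr
      (mul_pos hP₁ (sum_pos (fun i _ => Real.log_pos (hone_lt i)) univ_nonempty))
end
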